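/- arXiv:1412.6406 — 6 statements merged into one kernel-verified Lean document; each statement's English description precedes it below -/
import Mathlib

section
/- Let X and Y be nonempty compact subsets of ℂ with Y ⊆ X. If R(X) = C(X, ℂ) (that is, every continuous complex-valued function on X is a uniform limit on X of rational functions with poles off X), then R(Y) = C(Y, ℂ). -/
open Metric Set

/-- `R₀(X)`: the restrictions to `X` of rational functions with poles off `X`, i.e. quotients
`p/q` of complex polynomials with `q` nonvanishing on `X`. -/
def R0set (X : Set ℂ) : Set C(X, ℂ) :=
  {f | ∃ p q : Polynomial ℂ, (∀ x : X, q.eval (x : ℂ) ≠ 0) ∧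
    ∀ x : X, f x = p.eval (x : ℂ) / q.eval (x : ℂ)}

/-- `R(X)`: the uniform closure in `C(X, ℂ)` of the rational functions with poles off `X`.
(On the compact space `X` the topology of `C(X, ℂ)` is that of uniform convergence.) -/
noncomputable def Rx (X : Set ℂ) [CompactSpace X] : Subalgebra ℂ C(X, ℂ) :=
  (Algebra.adjoin ℂ (R0set X)).topologicalClosure

/-- A bounded point derivation on `R(X)` at `x`: a continuous linear functional `d` on `R(X)`
satisfying `d(fg) = f(x)d(g) + d(f)g(x)` for all `f, g ∈ R(X)`. -/
def IsBPD (X : Set ℂ) [CompactSpace X] (x : X) (d : Rx X →L[ℂ] ℂ) : Prop :=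
  ∀ f g : Rx X, d (f * g) = (f : C(X, ℂ)) x * d g + d f * (g : C(X, ℂ)) x

/-- `R(X)` is regular: for every closed `E ⊆ X` and `x ∈ X ∖ E` there is `f ∈ R(X)` with
`f(x) = 1` and `f ≡ 0` on `E`. -/
def RxRegular (X : Set ℂ) [CompactSpace X] : Prop :=
  ∀ E : Set X, IsClosed E → ∀ x : X, x ∉ E →
    ∃ f ∈ Rx X, f x = 1 ∧ ∀ y ∈ E, f y = 0

/-! The restriction map `C(X, ℂ) → C(Y, ℂ)` sends `R(X)` into `R(Y)`, because a rational function
with poles off `X` has its poles off `Y`, and it is onto by the Tietze extension theorem. -/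

open ContinuousMap

theorem R0set_comp_inclusion {X Y : Set ℂ} (hYX : Y ⊆ X) {f : C(X, ℂ)} (hf : f ∈ R0set X) :
    f.comp (inclusion hYX) ∈ R0set Y := by
  obtain ⟨p, q, hq, hpq⟩ := hf
  exact ⟨p, q, fun y => hq (Set.inclusion hYX y), fun y => hpq (Set.inclusion hYX y)⟩

theorem Rx_le_comap_compRightAlgHom_inclusion {X Y : Set ℂ} [CompactSpace X] [CompactSpace Y]
    (hYX : Y ⊆ X) : Rx X ≤ (Rx Y).comap (compRightAlgHom ℂ ℂ (inclusion hYX)) := by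
  refine Subalgebra.topologicalClosure_minimal ?_
    ((Subalgebra.isClosed_topologicalClosure _).preimage (compRightAlgHom_continuous ℂ ℂ _))
  rw [Algebra.adjoin_le_iff]
  exact fun f hf => Subalgebra.le_topologicalClosure _
    (Algebra.subset_adjoin (R0set_comp_inclusion hYX hf))

theorem stmt_0_general (X Y : Set ℂ) [CompactSpace X] [CompactSpace Y]
    (hYc : IsCompact Y) (hYX : Y ⊆ X) (h : Rx X = ⊤) : Rx Y = ⊤ := by
  refine eq_top_iff.2 fun g _ => ?_
  obtain ⟨f, rfl⟩ := g.exists_extension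
    (.inclusion hYX (hYc.isClosed.preimage continuous_subtype_val))
  exact Rx_le_comap_compRightAlgHom_inclusion hYX (h ▸ Algebra.mem_top : f ∈ Rx X)

/-- if `R(X) = C(X, ℂ)` and `Y ⊆ X` (both nonempty compact), then
`R(Y) = C(Y, ℂ)`. -/
theorem stmt_0 (X Y : Set ℂ) [CompactSpace X] [CompactSpace Y]
    (hXc : IsCompact X) (hYc : IsCompact Y) (hXne : X.Nonempty) (hYne : Y.Nonempty)
    (hYX : Y ⊆ X) (h : Rx X = ⊤) : Rx Y = ⊤ :=
  stmt_0_general X Y hYc hYX h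
end

section
/- Let X and Y be nonempty compact subsets of ℂ with Y ⊆ X. If R(X) has no non-zero bounded point derivation at any point of X, then R(Y) has no non-zero bounded point derivation at any point of Y. -/
open Metric Set

/-!
A point of the interior of `X` would carry the non-zero bounded point derivation `f ↦ f'(a)`
(Cauchy's estimate bounds it), so `X` has empty interior. Then every pole `a ∉ Y` is a limit of
poles `w ∉ X`, and `(z - w)⁻¹ → (z - a)⁻¹` uniformly on `Y`; hence restrictions of elements of
`R(X)` are dense in `R(Y)`. A bounded point derivation on `R(Y)` at `y`, composed with the
restriction, is one on `R(X)` at `y`, so it vanishes on a dense set and therefore everywhere.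
-/

open Filter Topology

section RationalApproximation

noncomputable def invSub (Y : Set ℂ) : C(↥Yᶜ, C(Y, ℂ)) :=
  ContinuousMap.curry
    ⟨fun p => ((p.2 : ℂ) - p.1)⁻¹,
      ((continuous_subtype_val.comp continuous_snd).sub
        (continuous_subtype_val.comp continuous_fst)).inv₀
        fun p => sub_ne_zero.mpr (ne_of_mem_of_not_mem p.2.2 p.1.2)⟩

theorem invSub_apply {Y : Set ℂ} (w : ↥Yᶜ) (y : Y) : invSub Y w y = ((y : ℂ) - w)⁻¹ := rfl

variable {Y : Set ℂ} (A : Subalgebra ℂ C(Y, ℂ))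

theorem exists_mem_mul_eval_eq_one (hinv : ∀ w : ↥Yᶜ, invSub Y w ∈ A) {q : Polynomial ℂ}
    (hq : ∀ y : Y, q.eval (y : ℂ) ≠ 0) : ∃ g ∈ A, ∀ y : Y, g y * q.eval (y : ℂ) = 1 := by
  let P : Polynomial ℂ → Prop := fun r => ∃ g ∈ A, ∀ y : Y, g y * r.eval (y : ℂ) = 1
  have hmul : ∀ r s, P r → P s → P (r * s) := by
    rintro r s ⟨g, hg, hgr⟩ ⟨h, hh, hhs⟩
    refine ⟨g * h, A.mul_mem hg hh, fun y => ?_⟩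
    rw [ContinuousMap.mul_apply, Polynomial.eval_mul, mul_mul_mul_comm, hgr, hhs, one_mul]
  have hroots : P (q.roots.map fun a => Polynomial.X - Polynomial.C a).prod := by
    refine Multiset.prod_induction P _ hmul ⟨1, A.one_mem, fun y => by simp⟩ ?_
    simp only [Multiset.mem_map]
    rintro _ ⟨a, ha, rfl⟩
    have haY : a ∉ Y := fun haY => hq ⟨a, haY⟩ (Polynomial.isRoot_of_mem_roots ha)
    refine ⟨invSub Y ⟨a, haY⟩, hinv _, fun y => ?_⟩
    rw [invSub_apply, Polynomial.eval_sub, Polynomial.eval_X, Polynomial.eval_C]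
    exact inv_mul_cancel₀ (sub_ne_zero.mpr (ne_of_mem_of_not_mem y.2 haY))
  by_cases hq0 : q = 0
  · exact ⟨0, A.zero_mem, fun y => absurd (by simp [hq0]) (hq y)⟩
  have hlead : P (Polynomial.C q.leadingCoeff) :=
    ⟨algebraMap ℂ _ q.leadingCoeff⁻¹, A.algebraMap_mem _, fun y => by simp [hq0]⟩
  have := hmul _ _ hlead hroots
  rwa [← (IsAlgClosed.splits q).eq_prod_roots] at this

theorem R0set_subset_of_forall_invSub_mem
    (hpoly : ∀ p : Polynomial ℂ, p.toContinuousMapOn Y ∈ A) (hinv : ∀ w : ↥Yᶜ, invSub Y w ∈ A) :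
    R0set Y ⊆ A := by
  rintro f ⟨p, q, hq, hf⟩
  obtain ⟨g, hg, hgq⟩ := exists_mem_mul_eval_eq_one A hinv hq
  have : f = p.toContinuousMapOn Y * g := by
    ext y
    rw [hf, ContinuousMap.mul_apply, Polynomial.toContinuousMapOn_apply, div_eq_iff (hq y),
      mul_assoc, hgq, mul_one]
    rfl
  exact this ▸ A.mul_mem (hpoly p) hg

theorem invSub_mem_of_dense (hA : IsClosed (A : Set C(Y, ℂ))) (hY : IsClosed Y) {W : Set ℂ}
    (hW : Dense W) (hWA : ∀ w : ↥Yᶜ, (w : ℂ) ∈ W → invSub Y w ∈ A) (w : ↥Yᶜ) :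
    invSub Y w ∈ A := by
  have hdense : Dense ((↑) ⁻¹' W : Set ↥Yᶜ) := hW.preimage hY.isOpen_compl.isOpenMap_subtype_val
  have hclosed : IsClosed (invSub Y ⁻¹' A) := hA.preimage (invSub Y).continuous
  exact hclosed.closure_subset_iff.mpr hWA (hdense.closure_eq.symm ▸ mem_univ w)

end RationalApproximation

theorem R0set_subset_Rx {X : Set ℂ} [CompactSpace X] : R0set X ⊆ Rx X :=
  fun _ hf => Subalgebra.le_topologicalClosure _ (Algebra.subset_adjoin hf)

section PointDerivation

variable {X : Set ℂ}

open Classical in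
noncomputable def extendByZero (f : C(X, ℂ)) (z : ℂ) : ℂ := if h : z ∈ X then f ⟨z, h⟩ else 0

theorem extendByZero_of_mem (f : C(X, ℂ)) {z : ℂ} (hz : z ∈ X) : extendByZero f z = f ⟨z, hz⟩ :=
  dif_pos hz

theorem extendByZero_add (f g : C(X, ℂ)) :
    extendByZero (f + g) = extendByZero f + extendByZero g := by
  funext z; by_cases hz : z ∈ X <;> simp [extendByZero, hz]

theorem extendByZero_mul (f g : C(X, ℂ)) :
    extendByZero (f * g) = extendByZero f * extendByZero g := by
  funext z; by_cases hz : z ∈ X <;> simp [extendByZero, hz]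

theorem extendByZero_smul (c : ℂ) (f : C(X, ℂ)) : extendByZero (c • f) = c • extendByZero f := by
  funext z; by_cases hz : z ∈ X <;> simp [extendByZero, hz]

variable {U : Set ℂ}

theorem differentiableOn_extendByZero_of_mem_adjoin (hUX : U ⊆ X) {f : C(X, ℂ)}
    (hf : f ∈ Algebra.adjoin ℂ (R0set X)) : DifferentiableOn ℂ (extendByZero f) U := by
  induction hf using Algebra.adjoin_induction with
  | mem f hf =>
    obtain ⟨p, q, hq, hpq⟩ := hf
    refine (p.differentiableOn.div q.differentiableOn fun z hz => hq ⟨z, hUX hz⟩).congr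
      fun z hz => ?_
    rw [extendByZero_of_mem f (hUX hz), hpq]
    rfl
  | algebraMap c =>
    exact (differentiableOn_const c).congr fun z hz => extendByZero_of_mem _ (hUX hz)
  | add f g _ _ hf hg => rw [extendByZero_add]; exact hf.add hg
  | mul f g _ _ hf hg => rw [extendByZero_mul]; exact hf.mul hg

variable [CompactSpace X]

/-- Uniform limits of holomorphic functions are holomorphic. -/
theorem differentiableOn_extendByZero (hU : IsOpen U) (hUX : U ⊆ X) {f : C(X, ℂ)}
    (hf : f ∈ Rx X) : DifferentiableOn ℂ (extendByZero f) U := by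
  obtain ⟨u, hu, hlim⟩ := mem_closure_iff_seq_limit.mp hf
  have hunif : TendstoUniformlyOn (fun n => extendByZero (u n)) (extendByZero f) atTop U := by
    rw [tendstoUniformlyOn_iff_tendstoUniformly_comp_coe]
    convert (ContinuousMap.tendsto_iff_tendstoUniformly.mp hlim).comp (inclusion hUX) using 1
    · funext n z; exact extendByZero_of_mem _ (hUX z.2)
    · funext z; exact extendByZero_of_mem _ (hUX z.2)
  exact hunif.tendstoLocallyUniformlyOn.differentiableOn
    (Eventually.of_forall fun n => differentiableOn_extendByZero_of_mem_adjoin hUX (hu n)) hU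

variable {a : ℂ} {r : ℝ}

/-- Cauchy's estimate on the circle of radius `r / 2`. -/
theorem norm_deriv_extendByZero_le (hr : 0 < r) (hball : ball a r ⊆ X) {f : C(X, ℂ)}
    (hf : f ∈ Rx X) : ‖deriv (extendByZero f) a‖ ≤ 2 / r * ‖f‖ := by
  have hsub : closedBall a (r / 2) ⊆ ball a r := closedBall_subset_ball (by linarith)
  have hcl : DiffContOnCl ℂ (extendByZero f) (ball a (r / 2)) := by
    refine (differentiableOn_extendByZero isOpen_ball hball hf).mono ?_ |>.diffContOnCl
    rw [closure_ball a (by positivity)]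
    exact hsub
  calc ‖deriv (extendByZero f) a‖ ≤ ‖f‖ / (r / 2) := by
        refine Complex.norm_deriv_le_of_forall_mem_sphere_norm_le (by positivity) hcl
          fun z hz => ?_
        rw [extendByZero_of_mem f (hball (hsub (sphere_subset_closedBall hz)))]
        exact f.norm_coe_le_norm _
    _ = 2 / r * ‖f‖ := by field_simp

theorem differentiableAt_extendByZero (hr : 0 < r) (hball : ball a r ⊆ X) {f : C(X, ℂ)}
    (hf : f ∈ Rx X) : DifferentiableAt ℂ (extendByZero f) a :=
  (differentiableOn_extendByZero isOpen_ball hball hf).differentiableAt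
    (isOpen_ball.mem_nhds (mem_ball_self hr))

noncomputable def derivAtCLM (hr : 0 < r) (hball : ball a r ⊆ X) : Rx X →L[ℂ] ℂ :=
  LinearMap.mkContinuous
    { toFun := fun f => deriv (extendByZero (f : C(X, ℂ))) a
      map_add' := fun f g => by
        simp only [Subalgebra.coe_add, extendByZero_add]
        exact deriv_add (differentiableAt_extendByZero hr hball f.2)
          (differentiableAt_extendByZero hr hball g.2)
      map_smul' := fun c f => by
        simp only [Subalgebra.coe_smul, extendByZero_smul, RingHom.id_apply, smul_eq_mul]
        exact deriv_const_smul c (differentiableAt_extendByZero hr hball f.2) }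
    (2 / r) fun f => norm_deriv_extendByZero_le hr hball f.2

theorem derivAtCLM_apply (hr : 0 < r) (hball : ball a r ⊆ X) (f : Rx X) :
    derivAtCLM hr hball f = deriv (extendByZero (f : C(X, ℂ))) a := rfl

theorem isBPD_derivAtCLM (hr : 0 < r) (hball : ball a r ⊆ X) :
    IsBPD X ⟨a, hball (mem_ball_self hr)⟩ (derivAtCLM hr hball) := by
  intro f g
  simp only [derivAtCLM_apply, Subalgebra.coe_mul, extendByZero_mul]
  rw [deriv_mul (differentiableAt_extendByZero hr hball f.2)
    (differentiableAt_extendByZero hr hball g.2), extendByZero_of_mem _ (hball (mem_ball_self hr)),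
    extendByZero_of_mem _ (hball (mem_ball_self hr))]
  ring

theorem derivAtCLM_coordinate (hr : 0 < r) (hball : ball a r ⊆ X) :
    derivAtCLM hr hball ⟨Polynomial.X.toContinuousMapOn X,
      R0set_subset_Rx ⟨Polynomial.X, 1, by simp, by simp⟩⟩ = 1 := by
  rw [derivAtCLM_apply]
  have : extendByZero (Polynomial.X.toContinuousMapOn X) =ᶠ[𝓝 a] id := by
    filter_upwards [isOpen_ball.mem_nhds (mem_ball_self hr)] with z hz
    rw [extendByZero_of_mem _ (hball hz)]
    simp
  rw [this.deriv_eq, deriv_id]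

theorem interior_eq_empty_of_forall_isBPD_eq_zero
    (h : ∀ (x : X) (d : Rx X →L[ℂ] ℂ), IsBPD X x d → d = 0) : interior X = ∅ := by
  by_contra hne
  obtain ⟨a, ha⟩ := nonempty_iff_ne_empty.mpr hne
  obtain ⟨r, hr, hball⟩ := Metric.isOpen_iff.mp isOpen_interior a ha
  have := derivAtCLM_coordinate hr (hball.trans interior_subset)
  rw [h _ _ (isBPD_derivAtCLM hr _)] at this
  exact zero_ne_one this

end PointDerivation

section Restriction

variable {X Y : Set ℂ} [CompactSpace X] [CompactSpace Y] (hYX : Y ⊆ X)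

noncomputable def restrictAlg : C(X, ℂ) →A[ℂ] C(Y, ℂ) where
  toAlgHom := ContinuousMap.compRightAlgHom ℂ ℂ (ContinuousMap.inclusion hYX)
  cont := ContinuousMap.compRightAlgHom_continuous ℂ ℂ _

theorem map_restrictAlg_Rx_le : (Rx X).map (restrictAlg hYX).toAlgHom ≤ Rx Y := by
  refine (Subalgebra.map_topologicalClosure_le _ _).trans
    (Subalgebra.topologicalClosure_mono ?_)
  rw [← Algebra.adjoin_image]
  refine Algebra.adjoin_mono ?_
  rintro _ ⟨f, ⟨p, q, hq, hpq⟩, rfl⟩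
  exact ⟨p, q, fun y => hq (inclusion hYX y), fun y => hpq (inclusion hYX y)⟩

noncomputable def restrictRx : Rx X →A[ℂ] Rx Y where
  toAlgHom := ((restrictAlg hYX).toAlgHom.comp (Rx X).val).codRestrict (Rx Y)
    fun f => map_restrictAlg_Rx_le hYX ⟨f, f.2, rfl⟩
  cont := ((restrictAlg hYX).continuous.comp continuous_subtype_val).subtype_mk _

theorem IsBPD.comp_restrictRx {y : Y} {d : Rx Y →L[ℂ] ℂ} (hd : IsBPD Y y d) :
    IsBPD X (inclusion hYX y) (d.comp (restrictRx hYX).toContinuousLinearMap) := by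
  intro f g
  simp only [ContinuousLinearMap.comp_apply, ContinuousAlgHom.coe_toContinuousLinearMap, map_mul]
  exact hd _ _

theorem Rx_le_topologicalClosure_map_restrictAlg (hX : Dense Xᶜ) :
    Rx Y ≤ ((Rx X).map (restrictAlg hYX).toAlgHom).topologicalClosure := by
  set A := ((Rx X).map (restrictAlg hYX).toAlgHom).topologicalClosure
  have hmem : ∀ f ∈ R0set X, restrictAlg hYX f ∈ A := fun f hf =>
    Subalgebra.le_topologicalClosure _ ⟨f, R0set_subset_Rx hf, rfl⟩
  refine Subalgebra.topologicalClosure_minimal (Algebra.adjoin_le ?_)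
    (Subalgebra.isClosed_topologicalClosure _)
  refine R0set_subset_of_forall_invSub_mem A
    (fun p => hmem (p.toContinuousMapOn X) ⟨p, 1, by simp, by simp⟩) ?_
  refine invSub_mem_of_dense A (Subalgebra.isClosed_topologicalClosure _)
    (isCompact_iff_compactSpace.mpr ‹_›).isClosed hX fun w hw => ?_
  exact hmem (invSub X ⟨w, hw⟩) ⟨1, Polynomial.X - Polynomial.C (w : ℂ),
    fun x => by simpa [sub_eq_zero] using ne_of_mem_of_not_mem x.2 hw,
    fun x => by simp [invSub_apply]⟩

theorem denseRange_restrictRx (hX : Dense Xᶜ) : DenseRange (restrictRx hYX) := by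
  intro f
  rw [IsInducing.subtypeVal.closure_eq_preimage_closure_image]
  refine closure_mono ?_ (Rx_le_topologicalClosure_map_restrictAlg hYX hX f.2)
  rintro _ ⟨g, hg, rfl⟩
  exact ⟨restrictRx hYX ⟨g, hg⟩, mem_range_self _, rfl⟩

end Restriction

theorem stmt_1_general (X Y : Set ℂ) [CompactSpace X] [CompactSpace Y]
    (hYX : Y ⊆ X)
    (h : ∀ (x : X) (d : Rx X →L[ℂ] ℂ), IsBPD X x d → d = 0) :
    ∀ (y : Y) (d : Rx Y →L[ℂ] ℂ), IsBPD Y y d → d = 0 := by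
  intro y d hd
  have hX : Dense Xᶜ :=
    interior_eq_empty_iff_dense_compl.mp (interior_eq_empty_of_forall_isBPD_eq_zero h)
  have hcomp : d.comp (restrictRx hYX).toContinuousLinearMap = 0 :=
    h _ _ (hd.comp_restrictRx hYX)
  exact DFunLike.coe_injective <| (denseRange_restrictRx hYX hX).equalizer d.continuous
    continuous_zero (funext fun f => congr($hcomp f))

/-- if `R(X)` has no non-zero bounded point derivation at any point of `X`
and `Y ⊆ X` (both nonempty compact), then `R(Y)` has no non-zero bounded point derivation
at any point of `Y`. -/
theorem stmt_1 (X Y : Set ℂ) [CompactSpace X] [CompactSpace Y]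
    (hXc : IsCompact X) (hYc : IsCompact Y) (hXne : X.Nonempty) (hYne : Y.Nonempty)
    (hYX : Y ⊆ X)
    (h : ∀ (x : X) (d : Rx X →L[ℂ] ℂ), IsBPD X x d → d = 0) :
    ∀ (y : Y) (d : Rx Y →L[ℂ] ℂ), IsBPD Y y d → d = 0 :=
  stmt_1_general X Y hYX h
end

section
/- Let X and Y be nonempty compact subsets of ℂ with Y ⊆ X. If R(X) is regular, then R(Y) is regular. -/
open Metric Set

/-- if `R(X)` is regular and `Y ⊆ X` (both nonempty compact), then `R(Y)` is
regular. -/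
theorem stmt_2 (X Y : Set ℂ) [CompactSpace X] [CompactSpace Y]
    (hXc : IsCompact X) (hYc : IsCompact Y) (hXne : X.Nonempty) (hYne : Y.Nonempty)
    (hYX : Y ⊆ X) (h : RxRegular X) : RxRegular Y := by
  intro E hE x hx
  -- the inclusion map Y → X as a continuous map
  set ι : C(Y, X) := ⟨Set.inclusion hYX, continuous_inclusion hYX⟩ with hι
  -- restriction algebra hom
  set ρ : C(X, ℂ) →ₐ[ℂ] C(Y, ℂ) := ContinuousMap.compRightAlgHom ℂ ℂ ι with hρ
  have hρcont : Continuous ρ := ContinuousMap.compRightAlgHom_continuous ℂ ℂ ι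
  -- E as a closed subset of X
  have hEcpt : IsCompact (Subtype.val '' E) :=
    (hE.isCompact).image continuous_subtype_val
  set E' : Set X := Subtype.val ⁻¹' (Subtype.val '' E) with hE'
  have hE'closed : IsClosed E' := hEcpt.isClosed.preimage continuous_subtype_val
  have hxE' : ι x ∉ E' := by
    intro hmem
    obtain ⟨e, heE, heq⟩ := hmem
    have : e = x := Subtype.ext heq
    exact hx (this ▸ heE)
  obtain ⟨f, hfR, hfx, hfE⟩ := h E' hE'closed (ι x) hxE'
  refine ⟨ρ f, ?_, ?_, ?_⟩
  · -- membership in Rx Y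
    have hmaps : MapsTo ρ (Algebra.adjoin ℂ (R0set X) : Set C(X, ℂ))
        (Algebra.adjoin ℂ (R0set Y) : Set C(Y, ℂ)) := by
      intro g hg
      have : ρ g ∈ (Algebra.adjoin ℂ (R0set X)).map ρ :=
        Subalgebra.mem_map.2 ⟨g, hg, rfl⟩
      rw [AlgHom.map_adjoin] at this
      refine Algebra.adjoin_mono ?_ this
      rintro _ ⟨u, ⟨p, q, hq, huval⟩, rfl⟩
      exact ⟨p, q, fun y => hq (ι y), fun y => huval (ι y)⟩
    exact map_mem_closure hρcont hfR hmaps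
  · exact hfx
  · intro y hyE
    have : ι y ∈ E' := ⟨y, hyE, rfl⟩
    exact hfE (ι y) this
end

section
/- Let A = ((a_n, r_n)) be an abstract Swiss cheese with ρ(A) < ∞. Then there exists a redundancy-free abstract Swiss cheese B = ((b_n, s_n)) such that the sequence (s_n)_{n ≥ 1} is non-increasing, ρ(B) ≤ ρ(A), X_B = X_A, closedBall(b_0, s_0) = closedBall(a_0, r_0), and for every open set U ⊆ ℂ one has ρ_U(B) ≤ ρ_U(A). -/
open Metric Set

/-- An abstract Swiss cheese: a sequence `((a_n, r_n))_{n ≥ 0}` of centres `a n ∈ ℂ` and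
non-negative radii `r n ∈ [0, ∞)`. -/
structure SwissCheese where
  a : ℕ → ℂ
  r : ℕ → ℝ
  r_nonneg : ∀ n, 0 ≤ r n

namespace SwissCheese

/-- The associated Swiss cheese set `X_A = closedBall(a₀, r₀) ∖ ⋃_{n ≥ 1} ball(a_n, r_n)`. -/
def cheeseSet (A : SwissCheese) : Set ℂ :=
  closedBall (A.a 0) (A.r 0) \ ⋃ n ∈ Set.Ici 1, ball (A.a n) (A.r n)

/-- The significant index set `S_A = {n ≥ 1 : r_n > 0}`. -/
def sig (A : SwissCheese) : Set ℕ := {n | 1 ≤ n ∧ 0 < A.r n}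

/-- The radius sum `ρ(A) = ∑_{n ≥ 1} r_n` is finite. -/
def RadSummable (A : SwissCheese) : Prop := Summable fun n => A.r (n + 1)

/-- The radius sum `ρ(A) = ∑_{n ≥ 1} r_n`. -/
noncomputable def radSum (A : SwissCheese) : ℝ := ∑' n, A.r (n + 1)

/-- The discrepancy `δ₁(A) = r₀ − ∑_{n ≥ 1} r_n`. -/
noncomputable def disc (A : SwissCheese) : ℝ := A.r 0 - A.radSum

/-- `A` is classical: `ρ(A) < ∞`, `r₀ > 0`, each significant closed disk is contained in
`ball(a₀, r₀)`, and distinct significant closed disks are disjoint. -/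
def IsClassical (A : SwissCheese) : Prop :=
  A.RadSummable ∧ 0 < A.r 0 ∧ ∀ k ∈ A.sig,
    closedBall (A.a k) (A.r k) ⊆ ball (A.a 0) (A.r 0) ∧
    ∀ l ∈ A.sig, l ≠ k → closedBall (A.a k) (A.r k) ∩ closedBall (A.a l) (A.r l) = ∅

/-- `A` is semiclassical: `ρ(A) < ∞`, `r₀ > 0`, each significant open disk is contained in
`ball(a₀, r₀)`, and distinct significant open disks are disjoint. -/
def IsSemiclassical (A : SwissCheese) : Prop :=
  A.RadSummable ∧ 0 < A.r 0 ∧ ∀ k ∈ A.sig,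
    ball (A.a k) (A.r k) ⊆ ball (A.a 0) (A.r 0) ∧
    ∀ l ∈ A.sig, l ≠ k → ball (A.a k) (A.r k) ∩ ball (A.a l) (A.r l) = ∅

/-- `A` is annular: `a₀ = a₁` and `r₀ > r₁ > 0`. -/
def IsAnnular (A : SwissCheese) : Prop := A.a 0 = A.a 1 ∧ A.r 1 < A.r 0 ∧ 0 < A.r 1

/-- The annular radius sum `ρ_ann(A) = ∑_{n ≥ 2} r_n`. -/
noncomputable def annRadSum (A : SwissCheese) : ℝ := ∑' n, A.r (n + 2)

/-- The annular discrepancy `δ_ann(A) = r₀ − r₁ − 2 ∑_{n ≥ 2} r_n`. -/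
noncomputable def annDisc (A : SwissCheese) : ℝ := A.r 0 - A.r 1 - 2 * A.annRadSum

/-- `A` is redundancy-free: every significant open disk meets `closedBall(a₀, r₀)`, and no
significant open disk is contained in another one. -/
def IsRedundancyFree (A : SwissCheese) : Prop :=
  ∀ k ∈ A.sig, (ball (A.a k) (A.r k) ∩ closedBall (A.a 0) (A.r 0)).Nonempty ∧
    ∀ l ∈ A.sig, l ≠ k → ¬ ball (A.a k) (A.r k) ⊆ ball (A.a l) (A.r l)

/-- `H_A(U)`: the set of significant indices whose closed disk meets `U`. -/
def HSet (A : SwissCheese) (U : Set ℂ) : Set ℕ :=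
  {n | n ∈ A.sig ∧ (closedBall (A.a n) (A.r n) ∩ U).Nonempty}

/-- `ρ_U(A) = ∑_{n ∈ H_A(U)} r_n`. -/
noncomputable def rhoU (A : SwissCheese) (U : Set ℂ) : ℝ := ∑' n : A.HSet U, A.r n

/-- The error set `E(A)`. -/
def errorSet (A : SwissCheese) : Set ℂ :=
  (⋃ m ∈ A.sig, ⋃ n ∈ A.sig, ⋃ _ : m ≠ n,
      closedBall (A.a m) (A.r m) ∩ closedBall (A.a n) (A.r n)) ∪
    ⋃ n ∈ A.sig, (ball (A.a 0) (A.r 0))ᶜ ∩ closedBall (A.a n) (A.r n)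

/-- A Swiss cheese set is compact. -/
instance (A : SwissCheese) : CompactSpace A.cheeseSet :=
  isCompact_iff_compactSpace.mp
    ((isCompact_closedBall _ _).diff (isOpen_biUnion fun _ _ => isOpen_ball))

end SwissCheese

/-
Keep, among the significant discs of `A` that meet the outer disc, only the maximal ones for
inclusion, one index per disc. Summability of the radii means a disc lies in only finitely many
others, so every disc meeting the outer disc lies in a kept one and the cheese set does not
change. Listing the kept discs greedily by decreasing radius makes the radii non-increasing,
and since distinct discs of `B` are distinct discs of `A`, every radius sum can only decrease.
-/

section Greedy

variable {ι : Type*} (r : ι → ℝ)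

open Classical in
noncomputable def greedyPick (S : Set ι) : Option ι :=
  if h : ∃ t ∈ S, ∀ u ∈ S, r u ≤ r t then some h.choose else none

lemma greedyPick_spec {S : Set ι} {t : ι} (h : greedyPick r S = some t) :
    t ∈ S ∧ ∀ u ∈ S, r u ≤ r t := by
  unfold greedyPick at h
  split_ifs at h with hS
  exact Option.some_injective _ h ▸ hS.choose_spec

lemma exists_greedyPick_eq_some {S : Set ι} (hS : ∃ t ∈ S, ∀ u ∈ S, r u ≤ r t) :
    ∃ t, greedyPick r S = some t :=
  ⟨hS.choose, dif_pos hS⟩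

variable (T : Set ι)

noncomputable def greedyRest : ℕ → Set ι
  | 0 => T
  | n + 1 => greedyRest n \ {t | greedyPick r (greedyRest n) = some t}

noncomputable def greedyEnum (n : ℕ) : Option ι := greedyPick r (greedyRest r T n)

lemma greedyRest_antitone : Antitone (greedyRest r T) :=
  antitone_nat_of_succ_le fun _ => sdiff_subset

lemma greedyEnum_mem_greedyRest {n : ℕ} {t : ι} (h : greedyEnum r T n = some t) :
    t ∈ greedyRest r T n :=
  (greedyPick_spec r h).1

lemma greedyEnum_mem {n : ℕ} {t : ι} (h : greedyEnum r T n = some t) : t ∈ T :=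
  greedyRest_antitone r T (Nat.zero_le n) (greedyEnum_mem_greedyRest r T h)

lemma not_mem_greedyRest_of_lt {m n : ℕ} {t : ι} (h : greedyEnum r T m = some t) (hmn : m < n) :
    t ∉ greedyRest r T n := fun ht =>
  (greedyRest_antitone r T hmn ht).2 h

lemma greedyEnum_inj {m n : ℕ} {t : ι} (hm : greedyEnum r T m = some t)
    (hn : greedyEnum r T n = some t) : m = n := by
  rcases lt_trichotomy m n with hmn | rfl | hnm
  · exact absurd (greedyEnum_mem_greedyRest r T hn) (not_mem_greedyRest_of_lt r T hm hmn)
  · rfl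
  · exact absurd (greedyEnum_mem_greedyRest r T hm) (not_mem_greedyRest_of_lt r T hn hnm)

variable {r T}

lemma exists_max_of_finite_superlevel (hfin : ∀ t ∈ T, {u ∈ T | r t ≤ r u}.Finite) {S : Set ι}
    (hST : S ⊆ T) (hS : S.Nonempty) : ∃ t ∈ S, ∀ u ∈ S, r u ≤ r t := by
  obtain ⟨t₀, ht₀⟩ := hS
  obtain ⟨t, ⟨htS, hle⟩, hmax⟩ := Set.exists_max_image {u ∈ S | r t₀ ≤ r u} r
    ((hfin t₀ (hST ht₀)).subset fun u hu => ⟨hST hu.1, hu.2⟩) ⟨t₀, ht₀, le_rfl⟩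
  refine ⟨t, htS, fun u hu => ?_⟩
  rcases le_or_gt (r t₀) (r u) with h | h
  · exact hmax u ⟨hu, h⟩
  · exact h.le.trans hle

lemma exists_greedyEnum_eq_some (hfin : ∀ t ∈ T, {u ∈ T | r t ≤ r u}.Finite) {n : ℕ}
    (hn : (greedyRest r T n).Nonempty) : ∃ t, greedyEnum r T n = some t :=
  exists_greedyPick_eq_some r <| exists_max_of_finite_superlevel hfin
    (greedyRest_antitone r T (Nat.zero_le n)) hn

/-- Every element of `T` is eventually picked: otherwise it stays available forever, and the
infinitely many distinct elements picked instead all lie in `{u ∈ T | r t ≤ r u}`. -/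
lemma exists_greedyEnum_eq (hfin : ∀ t ∈ T, {u ∈ T | r t ≤ r u}.Finite) {t : ι} (ht : t ∈ T) :
    ∃ n, greedyEnum r T n = some t := by
  by_contra! hnot
  have hrest : ∀ n, t ∈ greedyRest r T n := by
    intro n
    induction n with
    | zero => exact ht
    | succ n ih => exact ⟨ih, hnot n⟩
  choose pick hpick using fun n => exists_greedyEnum_eq_some hfin ⟨t, hrest n⟩
  have hinj : Function.Injective pick := fun m n hmn =>
    greedyEnum_inj r T (hpick m) (hmn ▸ hpick n)
  refine Set.infinite_range_of_injective hinj ((hfin t ht).subset ?_)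
  rintro _ ⟨n, rfl⟩
  exact ⟨greedyEnum_mem r T (hpick n), (greedyPick_spec r (hpick n)).2 t (hrest n)⟩

lemma antitone_greedyEnum (hfin : ∀ t ∈ T, {u ∈ T | r t ≤ r u}.Finite)
    (hnonneg : ∀ t ∈ T, 0 ≤ r t) : Antitone fun n => (greedyEnum r T n).elim 0 r := by
  refine antitone_nat_of_succ_le fun n => ?_
  cases hsucc : greedyEnum r T (n + 1) with
  | none =>
    cases hn : greedyEnum r T n with
    | none => exact le_rfl
    | some t => exact hnonneg t (greedyEnum_mem r T hn)
  | some u =>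
    have hu := greedyRest_antitone r T n.le_succ (greedyEnum_mem_greedyRest r T hsucc)
    obtain ⟨t, ht⟩ := exists_greedyEnum_eq_some hfin ⟨u, hu⟩
    simpa [ht] using (greedyPick_spec r ht).2 u hu

end Greedy

lemma le_of_ball_subset_ball {E : Type*} [NormedAddCommGroup E] [NormedSpace ℝ E] [Nontrivial E]
    {x y : E} {r s : ℝ} (hr : 0 ≤ r) (hs : 0 ≤ s) (h : ball x r ⊆ ball y s) : r ≤ s := by
  have := diam_mono h isBounded_ball
  rw [diam_ball_eq x hr, diam_ball_eq y hs] at this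
  linarith

namespace SwissCheese

variable (A : SwissCheese)

lemma RadSummable.summable {A : SwissCheese} (hA : A.RadSummable) : Summable A.r :=
  (summable_nat_add_iff 1).mp hA

lemma RadSummable.finite_setOf_le {A : SwissCheese} (hA : A.RadSummable) {ε : ℝ} (hε : 0 < ε) :
    {n | ε ≤ A.r n}.Finite := by
  simpa only [not_lt] using
    Filter.eventually_cofinite.mp (hA.summable.tendsto_cofinite_zero.eventually_lt_const hε)

lemma sig_indicator_succ (n : ℕ) : A.sig.indicator A.r (n + 1) = A.r (n + 1) := by
  rcases (A.r_nonneg (n + 1)).eq_or_lt with h | h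
  · simp [← h]
  · exact indicator_of_mem (show n + 1 ∈ A.sig from ⟨n.succ_pos, h⟩) _

lemma sig_subset_range_succ : A.sig ⊆ range Nat.succ := fun k hk =>
  ⟨k - 1, Nat.sub_add_cancel hk.1⟩

lemma radSummable_iff : A.RadSummable ↔ Summable fun k : A.sig => A.r k := by
  have hsupp : ∀ k ∉ range Nat.succ, A.sig.indicator A.r k = 0 := fun k hk =>
    indicator_of_notMem (fun h => hk (A.sig_subset_range_succ h)) _
  refine Iff.trans ?_ ((Nat.succ_injective.summable_iff hsupp).trans
    summable_subtype_iff_indicator.symm)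
  simp only [RadSummable, Function.comp_def, Nat.succ_eq_add_one, sig_indicator_succ]

lemma radSum_eq_tsum_sig : A.radSum = ∑' k : A.sig, A.r k :=
  calc A.radSum = ∑' n, A.sig.indicator A.r (n + 1) := by simp only [radSum, sig_indicator_succ]
    _ = ∑' k, A.sig.indicator A.r k :=
      Nat.succ_injective.tsum_eq (support_indicator_subset.trans A.sig_subset_range_succ)
    _ = ∑' k : A.sig, A.r k := (tsum_subtype _ _).symm

lemma mem_cheeseSet {x : ℂ} : x ∈ A.cheeseSet ↔
    x ∈ closedBall (A.a 0) (A.r 0) ∧ ∀ k ∈ A.sig, x ∉ ball (A.a k) (A.r k) := by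
  simp only [cheeseSet, mem_sdiff, mem_iUnion₂, mem_Ici, not_exists]
  exact and_congr_right fun _ =>
    ⟨fun h k hk => h k hk.1, fun h n hn hx => h n ⟨hn, pos_of_mem_ball hx⟩ hx⟩

/-- The indices of the discs kept in the redundancy-free cheese: the last condition says that the
disc of `n` is maximal among the significant discs and that `n` is the least index carrying it. -/
def essential : Set ℕ :=
  {n | n ∈ A.sig ∧ (ball (A.a n) (A.r n) ∩ closedBall (A.a 0) (A.r 0)).Nonempty ∧
    ∀ p ∈ A.sig, ball (A.a n) (A.r n) ⊆ ball (A.a p) (A.r p) →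
      ball (A.a p) (A.r p) ⊆ ball (A.a n) (A.r n) ∧ n ≤ p}

variable {A}

lemma eq_of_mem_essential {t u : ℕ} (ht : t ∈ A.essential) (hu : u ∈ A.essential)
    (h : ball (A.a t) (A.r t) ⊆ ball (A.a u) (A.r u)) : t = u :=
  have htu := ht.2.2 u hu.1 h
  le_antisymm htu.2 (hu.2.2 t ht.1 htu.1).2

/-- Only finitely many significant discs contain a given one, since their radii are bounded
below; so a maximal one exists. -/
lemma exists_mem_essential_superset (hA : A.RadSummable) {k : ℕ} (hk : k ∈ A.sig)
    (hmeet : (ball (A.a k) (A.r k) ∩ closedBall (A.a 0) (A.r 0)).Nonempty) :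
    ∃ t ∈ A.essential, ball (A.a k) (A.r k) ⊆ ball (A.a t) (A.r t) := by
  classical
  have hfin : {n | n ∈ A.sig ∧ ball (A.a k) (A.r k) ⊆ ball (A.a n) (A.r n)}.Finite :=
    (hA.finite_setOf_le hk.2).subset fun n hn =>
      le_of_ball_subset_ball (A.r_nonneg k) (A.r_nonneg n) hn.2
  obtain ⟨m, ⟨hm, hkm⟩, hmax⟩ :=
    hfin.exists_maximalFor (fun n => ball (A.a n) (A.r n)) _ ⟨k, hk, subset_rfl⟩
  have hsame : ∃ j, j ∈ A.sig ∧ ball (A.a j) (A.r j) = ball (A.a m) (A.r m) := ⟨m, hm, rfl⟩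
  obtain ⟨ht, hball⟩ := Nat.find_spec hsame
  refine ⟨Nat.find hsame, ⟨ht, ?_, fun p hp hsub => ?_⟩, hball.symm ▸ hkm⟩
  · exact hmeet.mono (inter_subset_inter_left _ (hball.symm ▸ hkm))
  · rw [hball] at hsub ⊢
    have hpm := hmax ⟨hp, hkm.trans hsub⟩ hsub
    exact ⟨hpm, Nat.find_min' hsame ⟨hp, hpm.antisymm hsub⟩⟩

lemma cheeseSet_eq_of_ball_subset {A B : SwissCheese}
    (hout : closedBall (B.a 0) (B.r 0) = closedBall (A.a 0) (A.r 0))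
    (hBA : ∀ k ∈ B.sig, ∃ l ∈ A.sig, ball (B.a k) (B.r k) ⊆ ball (A.a l) (A.r l))
    (hAB : ∀ l ∈ A.sig, ∀ x ∈ closedBall (A.a 0) (A.r 0), x ∈ ball (A.a l) (A.r l) →
      ∃ k ∈ B.sig, x ∈ ball (B.a k) (B.r k)) :
    B.cheeseSet = A.cheeseSet := by
  ext x
  simp only [mem_cheeseSet, hout]
  refine and_congr_right fun hx => ⟨fun hB l hl hxl => ?_, fun hA k hk hxk => ?_⟩
  · obtain ⟨k, hk, hxk⟩ := hAB l hl x hx hxl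
    exact hB k hk hxk
  · obtain ⟨l, hl, hsub⟩ := hBA k hk
    exact hA l hl (hsub hxk)

end SwissCheese

lemma summable_and_tsum_le_of_injOn {α β : Type*} {f : α → ℝ} {g : β → ℝ} {s : Set α}
    {t : Set β} {ψ : α → β} (hmaps : MapsTo ψ s t) (hinj : InjOn ψ s)
    (hfg : ∀ k ∈ s, f k = g (ψ k)) (hg : Summable fun k : t => g k) (hg0 : ∀ k ∈ t, 0 ≤ g k) :
    (Summable fun k : s => f k) ∧ ∑' k : s, f k ≤ ∑' k : t, g k := by
  have hi : Function.Injective (hmaps.restrict ψ s t) := hmaps.restrict_inj.mpr hinj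
  have hcomp : (fun k : s => f k) = (fun k : t => g k) ∘ hmaps.restrict ψ s t :=
    funext fun k => hfg k k.2
  rw [hcomp]
  exact ⟨hg.comp_injective hi, tsum_comp_le_tsum_of_inj hg (fun k => hg0 k k.2) hi⟩

namespace SwissCheese

variable {A B : SwissCheese} {ψ : ℕ → ℕ}

lemma radSummable_and_radSum_le_of_injOn (hA : A.RadSummable) (hmaps : MapsTo ψ B.sig A.sig)
    (hinj : InjOn ψ B.sig) (hr : ∀ k ∈ B.sig, B.r k = A.r (ψ k)) :
    B.RadSummable ∧ B.radSum ≤ A.radSum := by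
  rw [radSummable_iff, radSum_eq_tsum_sig, radSum_eq_tsum_sig]
  exact summable_and_tsum_le_of_injOn hmaps hinj hr (A.radSummable_iff.mp hA)
    fun k _ => A.r_nonneg k

lemma rhoU_le_of_injOn (hA : A.RadSummable) (hmaps : MapsTo ψ B.sig A.sig)
    (hinj : InjOn ψ B.sig) (hdisc : ∀ k ∈ B.sig, B.a k = A.a (ψ k) ∧ B.r k = A.r (ψ k))
    (U : Set ℂ) : B.rhoU U ≤ A.rhoU U := by
  have hmapsU : MapsTo ψ (B.HSet U) (A.HSet U) := fun k ⟨hk, hmeet⟩ =>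
    ⟨hmaps hk, by rwa [(hdisc k hk).1, (hdisc k hk).2] at hmeet⟩
  exact (summable_and_tsum_le_of_injOn hmapsU (hinj.mono fun k hk => hk.1)
    (fun k hk => (hdisc k hk.1).2) (hA.summable.subtype _) fun k _ => A.r_nonneg k).2

lemma isRedundancyFree_of_injOn (hout : closedBall (B.a 0) (B.r 0) = closedBall (A.a 0) (A.r 0))
    (hmaps : MapsTo ψ B.sig A.essential) (hinj : InjOn ψ B.sig)
    (hdisc : ∀ k ∈ B.sig, B.a k = A.a (ψ k) ∧ B.r k = A.r (ψ k)) : B.IsRedundancyFree := by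
  intro k hk
  rw [hout, (hdisc k hk).1, (hdisc k hk).2]
  refine ⟨(hmaps hk).2.1, fun l hl hlk hsub => hlk (hinj hl hk ?_)⟩
  rw [(hdisc l hl).1, (hdisc l hl).2] at hsub
  exact (eq_of_mem_essential (hmaps hk) (hmaps hl) hsub).symm

/-- The Swiss cheese with the outer disc of `A` whose `(m + 1)`-st inner disc is the `t`-th disc
of `A` if `c m = some t`, and empty if `c m = none`. -/
def select (A : SwissCheese) (c : ℕ → Option ℕ) : SwissCheese where
  a | 0 => A.a 0 | m + 1 => (c m).elim (A.a 0) A.a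
  r | 0 => A.r 0 | m + 1 => (c m).elim 0 A.r
  r_nonneg
    | 0 => A.r_nonneg 0
    | m + 1 => by cases h : c m <;> simp [h, A.r_nonneg]

/-- The index in `A` of the `k`-th disc of `A.select c` (junk `0` when that disc is empty). -/
def selectIndex (c : ℕ → Option ℕ) (k : ℕ) : ℕ := (c (k - 1)).getD 0

variable {c : ℕ → Option ℕ}

lemma exists_eq_some_of_mem_sig_select {k : ℕ} (hk : k ∈ (A.select c).sig) :
    ∃ m t, k = m + 1 ∧ c m = some t := by
  obtain ⟨m, rfl⟩ := Nat.exists_eq_add_one_of_ne_zero (Nat.one_le_iff_ne_zero.mp hk.1)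
  cases hm : c m with
  | none => simp [select, sig, hm] at hk
  | some t => exact ⟨m, t, rfl, hm⟩

lemma select_disc (k : ℕ) (hk : k ∈ (A.select c).sig) :
    (A.select c).a k = A.a (selectIndex c k) ∧ (A.select c).r k = A.r (selectIndex c k) := by
  obtain ⟨m, t, rfl, hm⟩ := exists_eq_some_of_mem_sig_select hk
  simp [select, selectIndex, hm]

lemma mapsTo_selectIndex {S : Set ℕ} (hc : ∀ m t, c m = some t → t ∈ S) :
    MapsTo (selectIndex c) (A.select c).sig S := fun k hk => by
  obtain ⟨m, t, rfl, hm⟩ := exists_eq_some_of_mem_sig_select hk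
  simpa [selectIndex, hm] using hc m t hm

lemma injOn_selectIndex (hc : ∀ m n t, c m = some t → c n = some t → m = n) :
    InjOn (selectIndex c) (A.select c).sig := fun k hk l hl hkl => by
  obtain ⟨m, t, rfl, hm⟩ := exists_eq_some_of_mem_sig_select hk
  obtain ⟨n, u, rfl, hn⟩ := exists_eq_some_of_mem_sig_select hl
  simp only [selectIndex, add_tsub_cancel_right, hm, hn, Option.getD_some] at hkl
  rw [hc m n t hm (hkl ▸ hn)]

lemma cheeseSet_select (hA : A.RadSummable) (hmem : ∀ m t, c m = some t → t ∈ A.sig)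
    (hsurj : ∀ t ∈ A.essential, ∃ m, c m = some t) : (A.select c).cheeseSet = A.cheeseSet := by
  refine cheeseSet_eq_of_ball_subset rfl (fun k hk => ⟨selectIndex c k, mapsTo_selectIndex hmem hk,
    by rw [(select_disc k hk).1, (select_disc k hk).2]⟩) fun l hl x hx hxl => ?_
  obtain ⟨t, ht, hsub⟩ := exists_mem_essential_superset hA hl ⟨x, hxl, hx⟩
  obtain ⟨m, hm⟩ := hsurj t ht
  refine ⟨m + 1, ⟨m.succ_pos, ?_⟩, ?_⟩ <;> simp only [select, hm, Option.elim_some]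
  exacts [ht.1.2, hsub hxl]

end SwissCheese

/-- every abstract Swiss cheese with `ρ(A) < ∞` admits a redundancy-free
version `B` with non-increasing radii, `ρ(B) ≤ ρ(A)`, the same Swiss cheese set, the same
outer closed disk, and `ρ_U(B) ≤ ρ_U(A)` for all open `U`. -/
theorem stmt_3 (A : SwissCheese) (hA : A.RadSummable) :
    ∃ B : SwissCheese, B.IsRedundancyFree ∧ B.RadSummable ∧
      (Antitone fun n => B.r (n + 1)) ∧ B.radSum ≤ A.radSum ∧
      B.cheeseSet = A.cheeseSet ∧
      Metric.closedBall (B.a 0) (B.r 0) = Metric.closedBall (A.a 0) (A.r 0) ∧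
      ∀ U : Set ℂ, IsOpen U → B.rhoU U ≤ A.rhoU U := by
  open SwissCheese in
  set T := A.essential
  have hfin : ∀ t ∈ T, {u ∈ T | A.r t ≤ A.r u}.Finite := fun t ht =>
    (hA.finite_setOf_le ht.1.2).subset fun _ hu => hu.2
  set c := greedyEnum A.r T
  have hmem : ∀ m t, c m = some t → t ∈ T := fun _ _ => greedyEnum_mem A.r T
  have hmaps : MapsTo (selectIndex c) (A.select c).sig T := mapsTo_selectIndex hmem
  have hmapsA : MapsTo (selectIndex c) (A.select c).sig A.sig := fun _ hk => (hmaps hk).1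
  have hinj := injOn_selectIndex (A := A) fun _ _ _ => greedyEnum_inj A.r T
  have hdisc := select_disc (A := A) (c := c)
  obtain ⟨hsumm, hle⟩ :=
    radSummable_and_radSum_le_of_injOn hA hmapsA hinj fun k hk => (hdisc k hk).2
  exact ⟨A.select c, isRedundancyFree_of_injOn (A := A) rfl hmaps hinj hdisc, hsumm,
    antitone_greedyEnum hfin fun t _ => A.r_nonneg t, hle,
    cheeseSet_select hA (fun m t hm => (hmem m t hm).1) fun _ => exists_greedyEnum_eq hfin, rfl,
    fun U _ => rhoU_le_of_injOn hA hmapsA hinj hdisc U⟩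
end

section
/- (Classicalisation theorem) Let A be an abstract Swiss cheese with δ_1(A) > 0. Then there exists a classical abstract Swiss cheese B such that δ_1(B) ≥ δ_1(A) and X_B ⊆ X_A. -/
/-! Zorn's lemma, applied to an order in which `B ≤ B'` means that `B'` arises from `B` by
shrinking the outer disc inside itself, enlarging holes, and deleting holes that (inside the
new outer disc) are covered by holes of smaller index; this order only shrinks the Swiss cheese
set. Among the cheeses `B ≥ A` with `δ₁(B) ≥ δ₁(A)`, every chain has an upper bound: the radii
converge along the chain, the centres are found by Cantor's intersection theorem, and the radius
sum passes to the limit as in Fatou's lemma. A maximal element is classical, for otherwise one of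
two moves that preserve `δ₁` produces a strictly larger cheese: if a hole reaches the boundary
of the outer disc, push the outer disc away from it and shrink it by the hole's radius; if two
holes meet, replace them by a single hole whose radius is the sum of theirs. -/

open Metric Set

open Filter Topology

theorem exists_forall_dist_le_sub_of_directed {α ι : Type*} [PseudoMetricSpace α] [ProperSpace α]
    [Preorder ι] [IsDirectedOrder ι] [Nonempty ι] (a : ι → α) (s : ι → ℝ) {m : ℝ}
    (hm : ∀ i, m ≤ s i) (hnested : ∀ i j, i ≤ j → dist (a j) (a i) ≤ s i - s j) :
    ∃ x, ∀ i, dist x (a i) ≤ s i - m := by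
  have hdir : Directed (· ⊇ ·) fun i => closedBall (a i) (s i - m) := fun i j => by
    obtain ⟨k, hik, hjk⟩ := exists_ge_ge i j
    exact ⟨k, closedBall_subset_closedBall' (by linarith [hnested i k hik]),
      closedBall_subset_closedBall' (by linarith [hnested j k hjk])⟩
  obtain ⟨x, hx⟩ := IsCompact.nonempty_iInter_of_directed_nonempty_isCompact_isClosed _ hdir
    (fun i => nonempty_closedBall.2 (by linarith [hm i])) (fun _ => isCompact_closedBall _ _)
    (fun _ => isClosed_closedBall)
  exact ⟨x, fun i => mem_iInter.1 hx i⟩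

theorem exists_dist_eq_dist_add {E : Type*} [NormedAddCommGroup E] [NormedSpace ℝ E] {x y : E}
    (hxy : x ≠ y) {r : ℝ} (hr : 0 ≤ r) : ∃ z, dist z x = r ∧ dist z y = dist x y + r := by
  have hd : 0 < dist y x := dist_pos.2 hxy.symm
  refine ⟨AffineMap.lineMap y x (1 + r / dist y x), ?_, ?_⟩
  · rw [dist_lineMap_right, sub_add_cancel_left, norm_neg, Real.norm_of_nonneg (by positivity),
      div_mul_cancel₀ _ hd.ne']
  · rw [dist_lineMap_left, Real.norm_of_nonneg (by positivity), add_mul, one_mul,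
      div_mul_cancel₀ _ hd.ne', dist_comm]

theorem summable_and_tsum_le_of_tendsto {ι β : Type*} {l : Filter ι} [l.NeBot] {f : ι → β → ℝ}
    {g : β → ℝ} {C : ι → ℝ} {C₀ : ℝ} (hf_nonneg : ∀ i b, 0 ≤ f i b) (hf : ∀ i, Summable (f i))
    (hle : ∀ i, ∑' b, f i b ≤ C i) (hfg : ∀ b, Tendsto (fun i => f i b) l (𝓝 (g b)))
    (hC : Tendsto C l (𝓝 C₀)) : Summable g ∧ ∑' b, g b ≤ C₀ := by
  have hg_nonneg : 0 ≤ g := fun b => ge_of_tendsto' (hfg b) fun i => hf_nonneg i b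
  have hsum : ∀ s : Finset β, ∑ b ∈ s, g b ≤ C₀ := fun s =>
    le_of_tendsto_of_tendsto (tendsto_finsetSum s fun b _ => hfg b) hC <| .of_forall fun i =>
      ((hf i).sum_le_tsum s fun b _ => hf_nonneg i b).trans (hle i)
  exact ⟨summable_of_sum_le hg_nonneg hsum, Real.tsum_le_of_sum_le hg_nonneg hsum⟩

namespace SwissCheese

theorem r_le_radSum {B : SwissCheese} (hB : B.RadSummable) {k : ℕ} (hk : 1 ≤ k) :
    B.r k ≤ B.radSum := by
  obtain ⟨i, rfl⟩ := Nat.exists_eq_add_of_le' hk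
  exact hB.le_tsum i fun j _ => B.r_nonneg (j + 1)

theorem r_eq_zero_of_not_pos {B : SwissCheese} {k : ℕ} (h : ¬0 < B.r k) : B.r k = 0 :=
  le_antisymm (not_lt.1 h) (B.r_nonneg k)

theorem radSum_nonneg (B : SwissCheese) : 0 ≤ B.radSum :=
  tsum_nonneg fun n => B.r_nonneg (n + 1)

@[simps]
def update (B : SwissCheese) (k : ℕ) (c : ℂ) (ρ : ℝ) (hρ : 0 ≤ ρ) : SwissCheese where
  a := Function.update B.a k c
  r := Function.update B.r k ρ
  r_nonneg n := by
    rcases eq_or_ne n k with rfl | hn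
    · simpa using hρ
    · simpa [hn] using B.r_nonneg n

section Update

variable {B : SwissCheese} {c : ℂ} {x : ℝ} {hx : 0 ≤ x}

theorem hasSum_update_succ {ρ : ℝ} (hB : HasSum (fun n => B.r (n + 1)) ρ) (i : ℕ) :
    HasSum (fun n => (B.update (i + 1) c x hx).r (n + 1)) (x - B.r (i + 1) + ρ) := by
  have h : (fun n => (B.update (i + 1) c x hx).r (n + 1)) =
      Function.update (fun n => B.r (n + 1)) i x :=
    funext fun n => by simp [Function.update_apply]
  exact h ▸ hB.update i x

theorem RadSummable.update_succ (hB : B.RadSummable) (i : ℕ) :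
    (B.update (i + 1) c x hx).RadSummable ∧
      (B.update (i + 1) c x hx).radSum = x - B.r (i + 1) + B.radSum :=
  have h := hasSum_update_succ (c := c) (hx := hx) hB.hasSum i
  ⟨h.summable, h.tsum_eq⟩

theorem r_succ_update_zero : (fun n => (B.update 0 c x hx).r (n + 1)) = fun n => B.r (n + 1) := by
  simp

theorem radSummable_update_zero_iff : (B.update 0 c x hx).RadSummable ↔ B.RadSummable := by
  rw [RadSummable, RadSummable, r_succ_update_zero]

theorem radSum_update_zero : (B.update 0 c x hx).radSum = B.radSum := by
  rw [radSum, radSum, r_succ_update_zero]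

end Update

/-- Covering a deleted hole by holes of smaller index only is what lets the holes deleted along a
chain be handled by induction on the index in the limit. -/
def HoleRefines (B B' : SwissCheese) (k : ℕ) : Prop :=
  (B'.r k = 0 ∧
      ball (B.a k) (B.r k) ∩ closedBall (B'.a 0) (B'.r 0) ⊆
        ⋃ j ∈ Ico 1 k, ball (B'.a j) (B'.r j)) ∨
    (0 < B.r k ∧ dist (B'.a k) (B.a k) ≤ B'.r k - B.r k)

structure Refines (B B' : SwissCheese) : Prop where
  outer : dist (B'.a 0) (B.a 0) ≤ B.r 0 - B'.r 0
  hole : ∀ k, 1 ≤ k → HoleRefines B B' k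

theorem HoleRefines.of_eq {B B' : SwissCheese} {k : ℕ} (ha : B'.a k = B.a k)
    (hr : B'.r k = B.r k) : HoleRefines B B' k := by
  rcases (B.r_nonneg k).eq_or_lt with h | h
  · exact Or.inl ⟨hr.trans h.symm, by simp [← h]⟩
  · exact Or.inr ⟨h, by simp [ha, hr]⟩

namespace Refines

variable {B B' B'' : SwissCheese} {k : ℕ}

theorem r_zero_le (h : Refines B B') : B'.r 0 ≤ B.r 0 := by
  linarith [h.outer, dist_nonneg (x := B'.a 0) (y := B.a 0)]

theorem closedBall_subset (h : Refines B B') :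
    closedBall (B'.a 0) (B'.r 0) ⊆ closedBall (B.a 0) (B.r 0) :=
  closedBall_subset_closedBall' (by linarith [h.outer])

theorem r_eq_zero (h : Refines B B') (hk : 1 ≤ k) (h0 : B.r k = 0) : B'.r k = 0 := by
  rcases h.hole k hk with ⟨h', -⟩ | ⟨hpos, -⟩
  · exact h'
  · exact absurd h0 hpos.ne'

theorem of_pos (h : Refines B B') (hk : 1 ≤ k) (hpos : 0 < B'.r k) :
    0 < B.r k ∧ dist (B'.a k) (B.a k) ≤ B'.r k - B.r k :=
  (h.hole k hk).resolve_left fun h' => hpos.ne' h'.1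

theorem ball_subset (h : Refines B B') (hk : 1 ≤ k) (hpos : 0 < B'.r k) :
    ball (B.a k) (B.r k) ⊆ ball (B'.a k) (B'.r k) :=
  ball_subset_ball' (by rw [dist_comm]; linarith [(h.of_pos hk hpos).2])

theorem ball_inter_subset (h : Refines B B') (hk : 1 ≤ k) (h0 : B'.r k = 0) :
    ball (B.a k) (B.r k) ∩ closedBall (B'.a 0) (B'.r 0) ⊆
      ⋃ j ∈ Ico 1 k, ball (B'.a j) (B'.r j) := by
  rcases h.hole k hk with ⟨-, hcov⟩ | ⟨hpos, hd⟩
  · exact hcov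
  · linarith [dist_nonneg (x := B'.a k) (y := B.a k)]

theorem refl (B : SwissCheese) : Refines B B :=
  ⟨by simp, fun _ _ => HoleRefines.of_eq rfl rfl⟩

theorem trans (h : Refines B B') (h' : Refines B' B'') : Refines B B'' := by
  refine ⟨by linarith [h.outer, h'.outer, dist_triangle (B''.a 0) (B'.a 0) (B.a 0)],
    fun k hk => ?_⟩
  by_cases hpos : 0 < B''.r k
  · obtain ⟨hpos', hd'⟩ := h'.of_pos hk hpos
    obtain ⟨hpos₀, hd⟩ := h.of_pos hk hpos'
    exact Or.inr ⟨hpos₀, by linarith [dist_triangle (B''.a k) (B'.a k) (B.a k)]⟩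
  have h0 := r_eq_zero_of_not_pos hpos
  refine Or.inl ⟨h0, fun x ⟨hxk, hx0⟩ => ?_⟩
  by_cases hpos' : 0 < B'.r k
  · exact h'.ball_inter_subset hk h0 ⟨h.ball_subset hk hpos' hxk, hx0⟩
  obtain ⟨j, hj, hxj⟩ := mem_iUnion₂.1 <| h.ball_inter_subset hk (r_eq_zero_of_not_pos hpos')
    ⟨hxk, h'.closedBall_subset hx0⟩
  by_cases hposj : 0 < B''.r j
  · exact mem_biUnion hj (h'.ball_subset hj.1 hposj hxj)
  obtain ⟨i, hi, hxi⟩ := mem_iUnion₂.1 <| h'.ball_inter_subset hj.1 (r_eq_zero_of_not_pos hposj)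
    ⟨hxj, hx0⟩
  exact mem_biUnion ⟨hi.1, hi.2.trans hj.2⟩ hxi

end Refines

instance : Preorder SwissCheese where
  le := Refines
  le_refl := Refines.refl
  le_trans _ _ _ := Refines.trans

theorem cheeseSet_subset_of_le {B B' : SwissCheese} (h : B ≤ B') :
    B'.cheeseSet ⊆ B.cheeseSet := by
  rintro x ⟨hx0, hx⟩
  refine ⟨Refines.closedBall_subset h hx0, fun hxB => hx ?_⟩
  obtain ⟨k, hk, hxk⟩ := mem_iUnion₂.1 hxB
  by_cases hpos : 0 < B'.r k
  · exact mem_biUnion hk (Refines.ball_subset h hk hpos hxk)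
  obtain ⟨j, hj, hxj⟩ := mem_iUnion₂.1 <| Refines.ball_inter_subset h hk
    (r_eq_zero_of_not_pos hpos) ⟨hxk, hx0⟩
  exact mem_biUnion hj.1 hxj

section Directed

variable {ι : Type*} [Preorder ι] {F : ι → SwissCheese}

theorem antitone_r_zero (hF : Monotone F) : Antitone fun i => (F i).r 0 :=
  fun _ _ h => Refines.r_zero_le (hF h)

theorem monotone_r (hF : Monotone F) {k : ℕ} (hk : 1 ≤ k) (hpos : ∀ i, 0 < (F i).r k) :
    Monotone fun i => (F i).r k := fun i j h => by
  linarith [(Refines.of_pos (hF h) hk (hpos j)).2,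
    dist_nonneg (x := (F j).a k) (y := (F i).a k)]

theorem tendsto_r_of_eq_zero (hF : Monotone F) {k : ℕ} (hk : 1 ≤ k) {i₀ : ι}
    (h0 : (F i₀).r k = 0) : Tendsto (fun i => (F i).r k) atTop (𝓝 0) :=
  tendsto_const_nhds.congr' <| (eventually_ge_atTop i₀).mono fun _ hi =>
    (Refines.r_eq_zero (hF hi) hk h0).symm

theorem exists_tendsto_r [IsDirectedOrder ι] [Nonempty ι] (hF : Monotone F)
    (hbdd : ∀ k, 1 ≤ k → BddAbove (range fun i => (F i).r k)) (k : ℕ) :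
    ∃ ρ, Tendsto (fun i => (F i).r k) atTop (𝓝 ρ) := by
  rcases Nat.eq_zero_or_pos k with rfl | hk
  · exact ⟨_, tendsto_atTop_ciInf (antitone_r_zero hF)
      ⟨0, forall_mem_range.2 fun i => (F i).r_nonneg 0⟩⟩
  by_cases hpos : ∀ i, 0 < (F i).r k
  · exact ⟨_, tendsto_atTop_ciSup (monotone_r hF hk hpos) (hbdd k hk)⟩
  obtain ⟨i₀, hi₀⟩ := not_forall.1 hpos
  exact ⟨0, tendsto_r_of_eq_zero hF hk (r_eq_zero_of_not_pos hi₀)⟩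

theorem ball_inter_subset_of_monotone [IsDirectedOrder ι] (hF : Monotone F) {L : SwissCheese}
    (houter : ∀ i, dist (L.a 0) ((F i).a 0) ≤ (F i).r 0 - L.r 0)
    (hhole : ∀ k, 1 ≤ k → (∀ i, 0 < (F i).r k) →
      ∀ i, dist (L.a k) ((F i).a k) ≤ L.r k - (F i).r k)
    {k : ℕ} (hk : 1 ≤ k) {i₀ : ι} (h0 : (F i₀).r k = 0) (i : ι) :
    ball ((F i).a k) ((F i).r k) ∩ closedBall (L.a 0) (L.r 0) ⊆
      ⋃ j ∈ Ico 1 k, ball (L.a j) (L.r j) := by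
  induction k using Nat.strong_induction_on generalizing i₀ i with
  | _ k ih =>
  rintro x ⟨hxk, hx0⟩
  obtain ⟨i', hi₀, hi⟩ := exists_ge_ge i₀ i
  have hx0' : x ∈ closedBall ((F i').a 0) ((F i').r 0) :=
    closedBall_subset_closedBall' (by linarith [houter i']) hx0
  obtain ⟨j, hj, hxj⟩ := mem_iUnion₂.1 <| Refines.ball_inter_subset (hF hi) hk
    (Refines.r_eq_zero (hF hi₀) hk h0) ⟨hxk, hx0'⟩
  by_cases hpos : ∀ i, 0 < (F i).r j
  · exact mem_biUnion hj
      (ball_subset_ball' (by rw [dist_comm]; linarith [hhole j hj.1 hpos i']) hxj)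
  obtain ⟨i₁, hi₁⟩ := not_forall.1 hpos
  exact biUnion_subset_biUnion_left (Ico_subset_Ico_right hj.2.le)
    (ih j hj.2 hj.1 (r_eq_zero_of_not_pos hi₁) i' ⟨hxj, hx0⟩)

theorem le_of_monotone_of_dist_le [IsDirectedOrder ι] (hF : Monotone F) {L : SwissCheese}
    (houter : ∀ i, dist (L.a 0) ((F i).a 0) ≤ (F i).r 0 - L.r 0)
    (hhole : ∀ k, 1 ≤ k → (∀ i, 0 < (F i).r k) →
      ∀ i, dist (L.a k) ((F i).a k) ≤ L.r k - (F i).r k)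
    (hdead : ∀ k, 1 ≤ k → ∀ i, (F i).r k = 0 → L.r k = 0) (i : ι) : F i ≤ L := by
  refine ⟨houter i, fun k hk => ?_⟩
  by_cases hpos : ∀ i, 0 < (F i).r k
  · exact Or.inr ⟨hpos i, hhole k hk hpos i⟩
  obtain ⟨i₀, hi₀⟩ := not_forall.1 hpos
  have h0 := r_eq_zero_of_not_pos hi₀
  exact Or.inl ⟨hdead k hk i₀ h0, ball_inter_subset_of_monotone hF houter hhole hk h0 i⟩

theorem exists_forall_le_of_monotone [IsDirectedOrder ι] [Nonempty ι] (hF : Monotone F)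
    (hbdd : ∀ k, 1 ≤ k → BddAbove (range fun i => (F i).r k)) :
    ∃ L : SwissCheese, (∀ i, F i ≤ L) ∧
      ∀ k, Tendsto (fun i => (F i).r k) atTop (𝓝 (L.r k)) := by
  choose R hR using exists_tendsto_r hF hbdd
  obtain ⟨z₀, hz₀⟩ := exists_forall_dist_le_sub_of_directed (fun i => (F i).a 0)
    (fun i => (F i).r 0) ((antitone_r_zero hF).le_of_tendsto (hR 0)) fun _ _ h => (hF h).outer
  have hz : ∀ k, ∃ z : ℂ, 1 ≤ k → (∀ i, 0 < (F i).r k) →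
      ∀ i, dist z ((F i).a k) ≤ R k - (F i).r k := by
    intro k
    by_cases h : 1 ≤ k ∧ ∀ i, 0 < (F i).r k
    · obtain ⟨z, hz⟩ := exists_forall_dist_le_sub_of_directed (fun i => (F i).a k)
        (fun i => -(F i).r k) (m := -R k)
        (fun i => neg_le_neg ((monotone_r hF h.1 h.2).ge_of_tendsto (hR k) i))
        fun i j hij => by linarith [(Refines.of_pos (hF hij) h.1 (h.2 j)).2]
      exact ⟨z, fun _ _ i => by linarith [hz i]⟩
    · exact ⟨0, fun hk hpos => absurd ⟨hk, hpos⟩ h⟩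
  choose z hz using hz
  let L : SwissCheese :=
    ⟨Function.update z 0 z₀, R, fun k => ge_of_tendsto' (hR k) fun i => (F i).r_nonneg k⟩
  refine ⟨L, le_of_monotone_of_dist_le hF (L := L) (by simpa [L] using hz₀) (fun k hk => ?_)
    (fun k hk i h0 => tendsto_nhds_unique (hR k) (tendsto_r_of_eq_zero hF hk h0)), hR⟩
  simpa [L, Function.update_of_ne (show k ≠ 0 by omega)] using hz k hk

end Directed

def admissible (A : SwissCheese) : Set SwissCheese :=
  {B | A ≤ B ∧ B.RadSummable ∧ A.disc ≤ B.disc}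

theorem r_le_of_mem_admissible {A B : SwissCheese} (hB : B ∈ admissible A) {k : ℕ}
    (hk : 1 ≤ k) : B.r k ≤ A.r 0 - A.disc := by
  obtain ⟨hAB, hsum, hdisc⟩ := hB
  have := r_le_radSum hsum hk
  have := Refines.r_zero_le hAB
  unfold disc at hdisc ⊢
  linarith

theorem exists_upperBound_of_isChain {A : SwissCheese} {c : Set SwissCheese}
    (hcA : c ⊆ admissible A) (hc : IsChain (· ≤ ·) c) (hne : c.Nonempty) :
    ∃ L ∈ admissible A, ∀ B ∈ c, B ≤ L := by
  have : Nonempty c := hne.to_subtype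
  have : IsDirectedOrder c := hc.directedOn.isDirectedOrder
  obtain ⟨L, hle, hlim⟩ := exists_forall_le_of_monotone (F := ((↑) : c → SwissCheese))
    (fun _ _ h => h) fun k hk =>
      ⟨A.r 0 - A.disc, forall_mem_range.2 fun B => r_le_of_mem_admissible (hcA B.2) hk⟩
  have hradSum : ∀ B : c, B.1.radSum ≤ B.1.r 0 - A.disc := fun B => by
    have := (hcA B.2).2.2
    unfold disc at this ⊢
    linarith
  obtain ⟨hsum, hle_sum⟩ := summable_and_tsum_le_of_tendsto (l := atTop)
    (f := fun (B : c) n => B.1.r (n + 1)) (fun B _ => B.1.r_nonneg _) (fun B => (hcA B.2).2.1)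
    hradSum (fun n => hlim (n + 1)) ((hlim 0).sub_const A.disc)
  obtain ⟨B, hB⟩ := hne
  refine ⟨L, ⟨(hcA hB).1.trans (hle ⟨B, hB⟩), hsum, ?_⟩, fun B hB => hle ⟨B, hB⟩⟩
  unfold disc radSum at *
  linarith

theorem exists_lt_of_not_closedBall_subset_ball {M : SwissCheese} (hM : M.RadSummable) {k : ℕ}
    (hk : 1 ≤ k) (hpos : 0 < M.r k) (hlt : M.r k < M.r 0)
    (hout : ¬closedBall (M.a k) (M.r k) ⊆ ball (M.a 0) (M.r 0)) :
    ∃ M', M < M' ∧ M'.RadSummable ∧ M'.disc = M.disc := by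
  obtain ⟨i, rfl⟩ := Nat.exists_eq_add_of_le' hk
  have hd : M.r 0 ≤ dist (M.a 0) (M.a (i + 1)) + M.r (i + 1) := by
    by_contra! h
    exact hout (closedBall_subset_ball' (by rw [dist_comm]; linarith))
  have hne : M.a 0 ≠ M.a (i + 1) := fun h => by rw [h, dist_self] at hd; linarith
  obtain ⟨z, hz0, hzk⟩ := exists_dist_eq_dist_add hne hpos.le
  set M' := (M.update (i + 1) (M.a (i + 1)) 0 le_rfl).update 0 z (M.r 0 - M.r (i + 1))
    (by linarith)
  have hle : M ≤ M' := by
    refine ⟨by simp [M', hz0], fun j hj => ?_⟩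
    rcases eq_or_ne j (i + 1) with rfl | hji
    · refine Or.inl ⟨by simp [M'], fun x ⟨hxk, hx0⟩ => ?_⟩
      simp only [M', update_a, update_r, Function.update_self, mem_ball, mem_closedBall]
        at hxk hx0
      linarith [dist_triangle z x (M.a (i + 1)), dist_comm x z]
    · have hj0 : j ≠ 0 := by omega
      exact HoleRefines.of_eq (by simp [M', hji, hj0]) (by simp [M', hji, hj0])
  refine ⟨M', lt_of_le_not_ge hle fun h => ?_, ?_, ?_⟩
  · have := Refines.r_zero_le h
    simp only [M', update_r, Function.update_self] at this
    linarith
  · exact radSummable_update_zero_iff.2 (hM.update_succ i).1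
  · unfold disc
    rw [radSum_update_zero, (hM.update_succ i).2]
    simp only [M', update_r, Function.update_self]
    ring

theorem exists_lt_of_dist_le_add {M : SwissCheese} (hM : M.RadSummable) {k l : ℕ} (hk : 1 ≤ k)
    (hkl : k < l) (hrk : 0 < M.r k) (hrl : 0 < M.r l)
    (hd : dist (M.a k) (M.a l) ≤ M.r k + M.r l) :
    ∃ M', M < M' ∧ M'.RadSummable ∧ M'.disc = M.disc := by
  obtain ⟨i, rfl⟩ := Nat.exists_eq_add_of_le' hk
  obtain ⟨j, rfl⟩ := Nat.exists_eq_add_of_le' (hk.trans hkl.le)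
  have hij : i + 1 ≠ j + 1 := hkl.ne
  obtain ⟨z, hzk, hzl⟩ := exists_dist_le_le hrl.le hrk.le hd
  set M' := (M.update (j + 1) (M.a (j + 1)) 0 le_rfl).update (i + 1) z
    (M.r (i + 1) + M.r (j + 1)) (by positivity)
  have hle : M ≤ M' := by
    refine ⟨by simp [M'], fun n hn => ?_⟩
    rcases eq_or_ne n (i + 1) with rfl | hni
    · exact Or.inr ⟨hrk, by simpa [M', hij, dist_comm] using hzk⟩
    rcases eq_or_ne n (j + 1) with rfl | hnj
    · refine Or.inl ⟨by simp only [M', update_r, Function.update_of_ne hni, Function.update_self],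
        fun x hx => mem_biUnion ⟨hk, hkl⟩ ?_⟩
      refine ball_subset_ball' ?_ hx.1
      simp only [M', update_a, update_r, Function.update_self]
      linarith [dist_comm z (M.a (j + 1))]
    · exact HoleRefines.of_eq (by simp [M', hni, hnj]) (by simp [M', hni, hnj])
  refine ⟨M', lt_of_le_not_ge hle fun h => ?_, ?_, ?_⟩
  · rcases Refines.hole h (j + 1) (by omega) with ⟨h0, -⟩ | ⟨hpos, -⟩
    · exact hrl.ne' h0
    · simp only [M', update_r, Function.update_of_ne hij.symm, Function.update_self] at hpos
      exact lt_irrefl 0 hpos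
  · exact ((hM.update_succ j).1.update_succ i).1
  · unfold disc
    rw [((hM.update_succ j).1.update_succ i).2, (hM.update_succ j).2]
    simp only [M', update_r, Function.update_of_ne hij,
      Function.update_of_ne (Nat.succ_ne_zero i).symm,
      Function.update_of_ne (Nat.succ_ne_zero j).symm]
    ring

theorem isClassical_of_maximal {A M : SwissCheese} (hA : 0 < A.disc)
    (hM : Maximal (· ∈ admissible A) M) : M.IsClassical := by
  obtain ⟨hAM, hsum, hdisc⟩ := hM.prop
  have hmove : ¬∃ M', M < M' ∧ M'.RadSummable ∧ M'.disc = M.disc := fun ⟨M', hlt, hs, hd⟩ =>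
    hM.not_gt ⟨hAM.trans hlt.le, hs, hd ▸ hdisc⟩ hlt
  have hr0 : M.radSum < M.r 0 := by
    unfold disc at hA hdisc
    linarith
  refine ⟨hsum, (radSum_nonneg M).trans_lt hr0,
    fun k ⟨hk, hrk⟩ => ⟨?_, fun l ⟨hl, hrl⟩ hlk => ?_⟩⟩
  · by_contra hout
    exact hmove (exists_lt_of_not_closedBall_subset_ball hsum hk hrk
      ((r_le_radSum hsum hk).trans_lt hr0) hout)
  · by_contra hne
    have hd := dist_le_add_of_nonempty_closedBall_inter_closedBall (nonempty_iff_ne_empty.2 hne)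
    rcases hlk.lt_or_gt with h | h
    · exact hmove (exists_lt_of_dist_le_add hsum hl h hrl hrk (by rwa [dist_comm, add_comm]))
    · exact hmove (exists_lt_of_dist_le_add hsum hk h hrk hrl hd)

end SwissCheese

/-- Classicalisation theorem: if `δ₁(A) > 0` (in particular `ρ(A) < ∞`), then
there is a classical abstract Swiss cheese `B` with `δ₁(B) ≥ δ₁(A)` and `X_B ⊆ X_A`. -/
theorem stmt_9 (A : SwissCheese) (hsum : A.RadSummable) (hpos : 0 < A.disc) :
    ∃ B : SwissCheese, B.IsClassical ∧ A.disc ≤ B.disc ∧ B.cheeseSet ⊆ A.cheeseSet := by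
  obtain ⟨M, hAM, hM⟩ := zorn_le_nonempty₀ (SwissCheese.admissible A)
    (fun _ hcA hc B hB => SwissCheese.exists_upperBound_of_isChain hcA hc ⟨B, hB⟩) A
    ⟨le_rfl, hsum, le_rfl⟩
  exact ⟨M, SwissCheese.isClassical_of_maximal hpos hM, hM.prop.2.2,
    SwissCheese.cheeseSet_subset_of_le hAM⟩
end

section
/- Let a_1, a_2 ∈ ℂ and let r_1, r_2 > 0 be such that ball(a_1, r_1) ∩ ball(a_2, r_2) ≠ ∅. Then there exists a unique pair (a, r) ∈ ℂ × (0, ∞) such that r < r_1 + r_2, ball(a_1, r_1) ∪ ball(a_2, r_2) ⊆ ball(a, r), and r is minimal among all radii r' for which some open disk ball(a', r') contains ball(a_1, r_1) ∪ ball(a_2, r_2). -/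
/-!
In a real normed space `ball a r ⊆ ball b s` (with `r > 0`) iff `dist a b + r ≤ s`, so `ball b s`
contains `ball a₁ r₁ ∪ ball a₂ r₂` iff `b ∈ closedBall a₁ (s - r₁) ∩ closedBall a₂ (s - r₂)`.
By the triangle inequality this forces `s ≥ R := max (max r₁ r₂) ((dist a₁ a₂ + r₁ + r₂) / 2)`,
and for `s = R` the two closed balls meet. They meet in exactly one point: either one of them
has radius `0`, or their radii add up to `dist a₁ a₂`, and in a strictly convex space this pins
the point on the segment `[a₁, a₂]`.
-/

open Metric

section NormedSpace

variable {E : Type*} [NormedAddCommGroup E] [NormedSpace ℝ E]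

lemma exists_sameRay_norm_eq [Nontrivial E] (v : E) {t : ℝ} (ht : 0 ≤ t) :
    ∃ u : E, ‖u‖ = t ∧ SameRay ℝ v u := by
  rcases eq_or_ne v 0 with rfl | hv
  · obtain ⟨u, hu⟩ := exists_norm_eq E ht
    exact ⟨u, hu, SameRay.zero_left u⟩
  · refine ⟨(t * ‖v‖⁻¹) • v, ?_, SameRay.sameRay_nonneg_smul_right v (by positivity)⟩
    rw [norm_smul, Real.norm_of_nonneg (by positivity),
      inv_mul_cancel_right₀ (norm_ne_zero_iff.2 hv)]

lemma ball_subset_ball_iff [Nontrivial E] {a b : E} {r s : ℝ} (hr : 0 < r) :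
    ball a r ⊆ ball b s ↔ dist a b + r ≤ s := by
  refine ⟨fun h => ?_, fun h => ball_subset_ball' (by rwa [add_comm])⟩
  by_contra! hlt
  have hab : dist a b < s := h (mem_ball_self hr)
  -- moving `a` away from `b` by `s - dist a b < r` stays in `ball a r` but reaches `sphere b s`
  obtain ⟨u, hu, hray⟩ := exists_sameRay_norm_eq (a - b) (sub_pos.2 hab).le
  have hu_mem : a + u ∈ ball a r := by
    rw [mem_ball, dist_self_add_left, hu]
    linarith
  have := h hu_mem
  rw [mem_ball, dist_eq_norm, add_sub_right_comm, hray.norm_add, hu, ← dist_eq_norm] at this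
  linarith

lemma union_ball_subset_ball_iff [Nontrivial E] {a₁ a₂ b : E} {r₁ r₂ s : ℝ} (hr₁ : 0 < r₁)
    (hr₂ : 0 < r₂) :
    ball a₁ r₁ ∪ ball a₂ r₂ ⊆ ball b s ↔ b ∈ closedBall a₁ (s - r₁) ∩ closedBall a₂ (s - r₂) := by
  simp only [Set.union_subset_iff, ball_subset_ball_iff hr₁, ball_subset_ball_iff hr₂,
    Set.mem_inter_iff, mem_closedBall, dist_comm b, le_sub_iff_add_le]

lemma closedBall_inter_closedBall_nonempty {x y : E} {ρ₁ ρ₂ : ℝ} (hρ₁ : 0 ≤ ρ₁) (hρ₂ : 0 ≤ ρ₂)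
    (h : dist x y ≤ ρ₁ + ρ₂) : (closedBall x ρ₁ ∩ closedBall y ρ₂).Nonempty := by
  rcases (add_nonneg hρ₁ hρ₂).eq_or_lt with hρ | hρ
  · exact ⟨x, mem_closedBall_self hρ₁, by rw [mem_closedBall]; linarith⟩
  refine ⟨AffineMap.lineMap x y (ρ₁ / (ρ₁ + ρ₂)), ?_, ?_⟩
  · rw [mem_closedBall, dist_lineMap_left, Real.norm_of_nonneg (by positivity)]
    calc ρ₁ / (ρ₁ + ρ₂) * dist x y ≤ ρ₁ / (ρ₁ + ρ₂) * (ρ₁ + ρ₂) := by gcongr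
      _ = ρ₁ := div_mul_cancel₀ _ hρ.ne'
  · have : 1 - ρ₁ / (ρ₁ + ρ₂) = ρ₂ / (ρ₁ + ρ₂) := by field_simp; ring
    rw [mem_closedBall, dist_lineMap_right, this, Real.norm_of_nonneg (by positivity)]
    calc ρ₂ / (ρ₁ + ρ₂) * dist x y ≤ ρ₂ / (ρ₁ + ρ₂) * (ρ₁ + ρ₂) := by gcongr
      _ = ρ₂ := div_mul_cancel₀ _ hρ.ne'

lemma closedBall_inter_closedBall_subsingleton [StrictConvexSpace ℝ E] {x y : E} {ρ₁ ρ₂ : ℝ}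
    (h : ρ₁ + ρ₂ ≤ dist x y) : (closedBall x ρ₁ ∩ closedBall y ρ₂).Subsingleton := by
  suffices key : ∀ p ∈ closedBall x ρ₁ ∩ closedBall y ρ₂,
      p = AffineMap.lineMap x y (ρ₁ / dist x y) from
    fun p hp q hq => (key p hp).trans (key q hq).symm
  rintro p ⟨hp₁, hp₂⟩
  rw [mem_closedBall'] at hp₁
  rw [mem_closedBall] at hp₂
  have htri := dist_triangle x p y
  have hx : dist x p = ρ₁ := by linarith
  have hy : dist p y = ρ₂ := by linarith
  rcases (dist_nonneg : 0 ≤ dist x y).eq_or_lt with hd | hd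
  · have : p = x := by rw [← dist_le_zero, dist_comm]; linarith [dist_nonneg (x := p) (y := y)]
    simp [this, ← hd]
  · apply eq_lineMap_of_dist_eq_mul_of_dist_eq_mul
    · rw [div_mul_cancel₀ _ hd.ne', hx]
    · rw [sub_mul, one_mul, div_mul_cancel₀ _ hd.ne']
      linarith

end NormedSpace

section MinEnclosingRadius

variable {α : Type*} [PseudoMetricSpace α]

/-- In a real normed space, the radius of the smallest ball containing `ball a₁ r₁ ∪ ball a₂ r₂`:
`r₁` or `r₂` when one ball contains the other, otherwise half the length
`dist a₁ a₂ + r₁ + r₂` of the union along the line of centres. -/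
noncomputable def minEnclosingRadius (a₁ a₂ : α) (r₁ r₂ : ℝ) : ℝ :=
  max (max r₁ r₂) ((dist a₁ a₂ + r₁ + r₂) / 2)

variable {a₁ a₂ : α} {r₁ r₂ : ℝ}

lemma le_minEnclosingRadius_left : r₁ ≤ minEnclosingRadius a₁ a₂ r₁ r₂ :=
  (le_max_left _ _).trans (le_max_left _ _)

lemma le_minEnclosingRadius_right : r₂ ≤ minEnclosingRadius a₁ a₂ r₁ r₂ :=
  (le_max_right _ _).trans (le_max_left _ _)

lemma dist_le_minEnclosingRadius_sub_add_sub :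
    dist a₁ a₂ ≤ (minEnclosingRadius a₁ a₂ r₁ r₂ - r₁) + (minEnclosingRadius a₁ a₂ r₁ r₂ - r₂) := by
  have := le_max_right (max r₁ r₂) ((dist a₁ a₂ + r₁ + r₂) / 2)
  rw [minEnclosingRadius]
  linarith

lemma minEnclosingRadius_le {b : α} {s : ℝ}
    (hb : b ∈ closedBall a₁ (s - r₁) ∩ closedBall a₂ (s - r₂)) :
    minEnclosingRadius a₁ a₂ r₁ r₂ ≤ s := by
  obtain ⟨hb₁, hb₂⟩ := hb
  rw [mem_closedBall'] at hb₁
  rw [mem_closedBall] at hb₂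
  have htri := dist_triangle a₁ b a₂
  have hb₁' := dist_nonneg (x := a₁) (y := b)
  have hb₂' := dist_nonneg (x := b) (y := a₂)
  exact max_le (max_le (by linarith) (by linarith)) (by linarith)

lemma minEnclosingRadius_lt_add (hr₁ : 0 < r₁) (hr₂ : 0 < r₂) (h : dist a₁ a₂ < r₁ + r₂) :
    minEnclosingRadius a₁ a₂ r₁ r₂ < r₁ + r₂ :=
  max_lt (max_lt (by linarith) (by linarith)) (by linarith)

end MinEnclosingRadius

section Centers

variable {E : Type*} [NormedAddCommGroup E] [NormedSpace ℝ E] (a₁ a₂ : E) (r₁ r₂ : ℝ)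

lemma minEnclosingRadius_centers_nonempty :
    (closedBall a₁ (minEnclosingRadius a₁ a₂ r₁ r₂ - r₁) ∩
      closedBall a₂ (minEnclosingRadius a₁ a₂ r₁ r₂ - r₂)).Nonempty :=
  closedBall_inter_closedBall_nonempty (sub_nonneg.2 le_minEnclosingRadius_left)
    (sub_nonneg.2 le_minEnclosingRadius_right) dist_le_minEnclosingRadius_sub_add_sub

lemma minEnclosingRadius_centers_subsingleton [StrictConvexSpace ℝ E] :
    (closedBall a₁ (minEnclosingRadius a₁ a₂ r₁ r₂ - r₁) ∩
      closedBall a₂ (minEnclosingRadius a₁ a₂ r₁ r₂ - r₂)).Subsingleton := by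
  rcases max_choice (max r₁ r₂) ((dist a₁ a₂ + r₁ + r₂) / 2) with h | h
  · rcases max_choice r₁ r₂ with h' | h'
    · refine (Set.subsingleton_singleton (a := a₁)).anti ?_
      rw [minEnclosingRadius, h, h', sub_self, closedBall_zero]
      exact Set.inter_subset_left
    · refine (Set.subsingleton_singleton (a := a₂)).anti ?_
      rw [minEnclosingRadius, h, h', sub_self, closedBall_zero]
      exact Set.inter_subset_right
  · exact closedBall_inter_closedBall_subsingleton (by rw [minEnclosingRadius, h]; linarith)

end Centers

/-- if two open disks of positive radii meet, then there is a unique pair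
`(a, r)` with `r > 0`, `r < r₁ + r₂`, `ball(a₁, r₁) ∪ ball(a₂, r₂) ⊆ ball(a, r)`, and `r`
minimal among all radii of open disks containing the union. -/
theorem stmt_13 (a₁ a₂ : ℂ) (r₁ r₂ : ℝ) (hr₁ : 0 < r₁) (hr₂ : 0 < r₂)
    (hmeet : (ball a₁ r₁ ∩ ball a₂ r₂).Nonempty) :
    ∃! p : ℂ × ℝ, 0 < p.2 ∧ p.2 < r₁ + r₂ ∧
      ball a₁ r₁ ∪ ball a₂ r₂ ⊆ ball p.1 p.2 ∧
      ∀ (a' : ℂ) (r' : ℝ), ball a₁ r₁ ∪ ball a₂ r₂ ⊆ ball a' r' → p.2 ≤ r' := by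
  set R := minEnclosingRadius a₁ a₂ r₁ r₂
  have enclosing_iff (b : ℂ) (s : ℝ) :=
    union_ball_subset_ball_iff (a₁ := a₁) (a₂ := a₂) (b := b) (s := s) hr₁ hr₂
  have hR_min : ∀ (a' : ℂ) (r' : ℝ), ball a₁ r₁ ∪ ball a₂ r₂ ⊆ ball a' r' → R ≤ r' :=
    fun a' r' h => minEnclosingRadius_le ((enclosing_iff a' r').1 h)
  obtain ⟨c, hc⟩ := minEnclosingRadius_centers_nonempty a₁ a₂ r₁ r₂
  refine ⟨(c, R), ⟨hr₁.trans_le le_minEnclosingRadius_left,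
    minEnclosingRadius_lt_add hr₁ hr₂ (dist_lt_add_of_nonempty_ball_inter_ball hmeet),
    (enclosing_iff c R).2 hc, hR_min⟩, ?_⟩
  rintro ⟨b, s⟩ ⟨-, -, hb, hs_min⟩
  obtain rfl : s = R := le_antisymm (hs_min c R ((enclosing_iff c R).2 hc)) (hR_min b s hb)
  exact Prod.ext
    (minEnclosingRadius_centers_subsingleton a₁ a₂ r₁ r₂ ((enclosing_iff b _).1 hb) hc) rfl
end
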